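/- Let 1 < p < 2, let d and n be positive integers, and let x¹, …, xⁿ be points in ℝ^d. Then the p-norm distance matrix B ∈ ℝ^{n×n} defined by B_{ij} = ‖xⁱ − xʲ‖_p is almost negative definite. Moreover, if n ≥ 2 and the points x¹, …, xⁿ are distinct, then B is strictly AND and (−1)^{n−1} · det B > 0; in particular B is nonsingular. -/

import Mathlib

/-!
For `0 < β < 1` and `t ≥ 0`, `c_β t^β = ∫₀^∞ (1 - e^{-ut}) u^{-1-β} du` with `c_β > 0`. If `E` is
almost negative definite with zero diagonal, then `-E_ij = M_ij - E_ii₀ - E_ji₀` with `M`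
positive semidefinite, so `e^{-uE}` is a diagonal congruence of the entrywise exponential of `uM`,
which is positive semidefinite by the Schur product theorem. Integrating the quadratic form of
`e^{-uE}` against `u^{-1-β}` shows that `E^{∘β}` is again almost negative definite, and strictly so
when `E` is positive off the diagonal, because then `e^{-uE} → 1` as `u → ∞`.

This is applied twice: with `β = p/2` to `(s_i - s_j)²` in each coordinate, giving
`∑_k |x_ik - x_jk|^p`, and then with `β = 1/p`.

A strictly almost negative definite matrix has at most one nonnegative eigenvalue, since two
eigenvectors span a plane meeting the hyperplane `∑ y = 0`; a positive total sum `1ᵀB1` forces a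
positive one, and this fixes the sign of the determinant.
-/

/-- A symmetric real matrix `A` is *almost negative definite* if
`yᵀ A y ≤ 0` for every vector `y` whose coordinates sum to zero. -/
def IsAND {n : ℕ} (A : Matrix (Fin n) (Fin n) ℝ) : Prop :=
  A.IsSymm ∧ ∀ y : Fin n → ℝ, (∑ i, y i) = 0 →
    ∑ i, ∑ j, y i * A i j * y j ≤ 0

/-- A symmetric real matrix `A` is *strictly almost negative definite* if
moreover `yᵀ A y < 0` for every nonzero such `y`. -/
def IsStrictAND {n : ℕ} (A : Matrix (Fin n) (Fin n) ℝ) : Prop :=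
  A.IsSymm ∧ ∀ y : Fin n → ℝ, (∑ i, y i) = 0 → y ≠ 0 →
    ∑ i, ∑ j, y i * A i j * y j < 0

/-- The `p`-norm `‖x‖_p = (∑ |x_k|^p)^(1/p)` on `ℝ^d`. -/
noncomputable def pNorm {d : ℕ} (p : ℝ) (x : Fin d → ℝ) : ℝ :=
  (∑ k, |x k| ^ p) ^ (1 / p)

open Real Matrix MeasureTheory Set Filter Topology
open scoped Matrix ComplexOrder

namespace Matrix

theorem dotProduct_mulVec_eq_sum {ι : Type*} [Fintype ι] (A : Matrix ι ι ℝ) (c : ι → ℝ) :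
    c ⬝ᵥ (A *ᵥ c) = ∑ i, ∑ j, c i * A i j * c j := by
  simp only [dotProduct, mulVec, Finset.mul_sum, mul_assoc]

theorem PosSemidef.map_pow {𝕜 ι : Type*} [RCLike 𝕜] [Fintype ι] {M : Matrix ι ι 𝕜}
    (hM : M.PosSemidef) (K : ℕ) : (M.map (· ^ K)).PosSemidef := by
  induction K with
  | zero => simpa [vecMulVec, Matrix.map] using posSemidef_vecMulVec_self_star (1 : ι → 𝕜)
  | succ K ih =>
    convert ih.hadamard hM using 1
    ext i j
    simp [pow_succ]

theorem PosSemidef.map_exp {ι : Type*} [Fintype ι] {M : Matrix ι ι ℝ} (hM : M.PosSemidef) :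
    (M.map rexp).PosSemidef := by
  refine .of_dotProduct_mulVec_nonneg (hM.isHermitian.map _ fun _ => rfl) fun c => ?_
  have hsum : HasSum (fun K : ℕ => ∑ i, ∑ j, c i * (M i j ^ K / K.factorial) * c j)
      (∑ i, ∑ j, c i * rexp (M i j) * c j) := by
    refine hasSum_sum fun i _ => hasSum_sum fun j _ => ?_
    rw [Real.exp_eq_exp_ℝ]
    exact ((NormedSpace.expSeries_div_hasSum_exp (M i j)).mul_left (c i)).mul_right (c j)
  rw [star_trivial, dotProduct_mulVec_eq_sum]
  refine hsum.nonneg fun K => ?_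
  have h := (hM.map_pow K).dotProduct_mulVec_nonneg c
  rw [star_trivial, dotProduct_mulVec_eq_sum] at h
  simp only [map_apply] at h
  calc (0 : ℝ) ≤ (∑ i, ∑ j, c i * M i j ^ K * c j) / K.factorial := by positivity
    _ = _ := by
      simp only [Finset.sum_div]
      exact Finset.sum_congr rfl fun i _ => Finset.sum_congr rfl fun j _ => by ring

namespace IsHermitian

variable {ι : Type*} [Fintype ι] [DecidableEq ι] {B : Matrix ι ι ℝ}

theorem dotProduct_mulVec_eigenvectorUnitary_mulVec (hB : B.IsHermitian) (w : ι → ℝ) :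
    ((hB.eigenvectorUnitary : Matrix ι ι ℝ) *ᵥ w) ⬝ᵥ
        (B *ᵥ ((hB.eigenvectorUnitary : Matrix ι ι ℝ) *ᵥ w)) =
      ∑ k, hB.eigenvalues k * w k ^ 2 := by
  set U : Matrix ι ι ℝ := (hB.eigenvectorUnitary : Matrix ι ι ℝ)
  have hdiag : star U * B * U = diagonal hB.eigenvalues := by
    simpa [Unitary.conjStarAlgAut_star_apply] using hB.conjStarAlgAut_star_eigenvectorUnitary
  have hstar : star U = Uᵀ := by rw [star_eq_conjTranspose, conjTranspose_eq_transpose_of_trivial]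
  rw [mulVec_mulVec, dotProduct_mulVec, ← vecMul_transpose U w, vecMul_vecMul, ← dotProduct_mulVec,
    ← mul_assoc, ← hstar, hdiag]
  simp only [dotProduct, mulVec_diagonal, sq]
  exact Finset.sum_congr rfl fun k _ => by ring

theorem exists_eigenvalues_pos (hB : B.IsHermitian) (hsum : 0 < ∑ i, ∑ j, B i j) :
    ∃ i, 0 < hB.eigenvalues i := by
  by_contra! h
  set U : Matrix ι ι ℝ := (hB.eigenvectorUnitary : Matrix ι ι ℝ)
  have hone : U *ᵥ (star U *ᵥ 1) = 1 := by
    rw [mulVec_mulVec, Unitary.mul_star_self_of_mem hB.eigenvectorUnitary.2, one_mulVec]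
  have hform := hB.dotProduct_mulVec_eigenvectorUnitary_mulVec (star U *ᵥ 1)
  rw [hone, dotProduct_mulVec_eq_sum] at hform
  simp only [Pi.one_apply, one_mul, mul_one] at hform
  exact hsum.not_ge (hform ▸ Finset.sum_nonpos fun k _ =>
    mul_nonpos_of_nonpos_of_nonneg (h k) (sq_nonneg _))

end IsHermitian

end Matrix

/-- Twice the Gromov product `(i | j)_{i₀}` of a distance-like matrix `E`. -/
def gromovMatrix {n : ℕ} (E : Matrix (Fin n) (Fin n) ℝ) (i₀ : Fin n) :
    Matrix (Fin n) (Fin n) ℝ :=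
  of fun i j => E i i₀ + E j i₀ - E i j

section Schoenberg

variable {n : ℕ} {E : Matrix (Fin n) (Fin n) ℝ}

theorem quadForm_gromovMatrix (hsymm : E.IsSymm) (hdiag : ∀ i, E i i = 0) (i₀ : Fin n)
    (c : Fin n → ℝ) :
    ∑ i, ∑ j, c i * gromovMatrix E i₀ i j * c j =
      -∑ i, ∑ j, (c - (∑ k, c k) • Pi.single i₀ 1 : Fin n → ℝ) i * E i j *
        (c - (∑ k, c k) • Pi.single i₀ 1 : Fin n → ℝ) j := by
  have hrow : ∀ j, E i₀ j = E j i₀ := fun j => hsymm.apply j i₀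
  simp only [gromovMatrix, of_apply, Pi.sub_apply, Pi.smul_apply, Pi.single_apply,
    smul_eq_mul, mul_ite, mul_one, mul_zero, sub_mul, mul_sub, mul_add, add_mul, ite_mul, zero_mul,
    Finset.sum_add_distrib, Finset.sum_sub_distrib, Finset.sum_ite_irrel, Finset.sum_const_zero,
    Finset.sum_ite_eq', Finset.mem_univ, if_true, hdiag, hrow]
  simp only [mul_assoc, ← Finset.mul_sum]
  simp only [← mul_assoc, ← Finset.sum_mul]
  ring

theorem IsAND.posSemidef_gromovMatrix (hE : IsAND E) (hdiag : ∀ i, E i i = 0) (i₀ : Fin n) :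
    (gromovMatrix E i₀).PosSemidef := by
  refine .of_dotProduct_mulVec_nonneg ?_ fun c => ?_
  · ext i j
    simp only [conjTranspose_apply, star_trivial, gromovMatrix, of_apply, hE.1.apply i j]
    ring
  · rw [star_trivial, dotProduct_mulVec_eq_sum, quadForm_gromovMatrix hE.1 hdiag, neg_nonneg]
    exact hE.2 _ (by simp [Finset.sum_sub_distrib, ← Finset.mul_sum])

theorem IsAND.posSemidef_map_exp_neg_mul (hE : IsAND E) (hdiag : ∀ i, E i i = 0) {u : ℝ}
    (hu : 0 ≤ u) : (E.map fun t => rexp (-(u * t))).PosSemidef := by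
  rcases isEmpty_or_nonempty (Fin n) with hn | ⟨⟨i₀⟩⟩
  · rw [Subsingleton.elim (E.map fun t => rexp (-(u * t))) 0]
    exact PosSemidef.zero
  set a : Fin n → ℝ := fun i => rexp (-(u * E i i₀))
  have hfactor : E.map (fun t => rexp (-(u * t))) =
      diagonal a * (u • gromovMatrix E i₀).map rexp * (diagonal a)ᴴ := by
    ext i j
    simp only [map_apply, diagonal_conjTranspose, star_trivial, diagonal_mul, mul_diagonal,
      Matrix.smul_apply, gromovMatrix, of_apply, smul_eq_mul, a, ← Real.exp_add]
    ring_nf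
  rw [hfactor]
  exact ((hE.posSemidef_gromovMatrix hdiag i₀).smul hu).map_exp.mul_mul_conjTranspose_same _

end Schoenberg

noncomputable def rpowIntegralConst (β : ℝ) : ℝ :=
  ∫ u in Ioi (0 : ℝ), (1 - rexp (-u)) * u ^ (-1 - β)

theorem integrableOn_one_sub_exp_mul_rpow {β t : ℝ} (hβ0 : 0 < β) (hβ1 : β < 1) (ht : 0 ≤ t) :
    IntegrableOn (fun u => (1 - rexp (-(u * t))) * u ^ (-1 - β)) (Ioi 0) := by
  have hcont : ContinuousOn (fun u => (1 - rexp (-(u * t))) * u ^ (-1 - β)) (Ioi 0) :=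
    ContinuousOn.mul (by fun_prop) fun u hu =>
      (continuousAt_rpow_const u _ (.inl hu.ne')).continuousWithinAt
  have hexp : ∀ u, 0 ≤ u → 0 ≤ 1 - rexp (-(u * t)) ∧ 1 - rexp (-(u * t)) ≤ min (u * t) 1 := by
    intro u hu
    have := add_one_le_exp (-(u * t))
    have := exp_le_one_iff.mpr (neg_nonpos.mpr (mul_nonneg hu ht))
    exact ⟨by linarith, le_min (by linarith) (by linarith [exp_nonneg (-(u * t))])⟩
  rw [← Ioc_union_Ioi_eq_Ioi zero_le_one]
  refine IntegrableOn.union ?_ ?_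
  · have hdom : IntegrableOn (fun u => t * u ^ (-β)) (Ioc 0 1) :=
      ((intervalIntegrable_iff_integrableOn_Ioc_of_le zero_le_one).mp
        (intervalIntegral.intervalIntegrable_rpow' (by linarith))).const_mul t
    refine hdom.mono' ((hcont.mono Ioc_subset_Ioi_self).aestronglyMeasurable measurableSet_Ioc) ?_
    filter_upwards [ae_restrict_mem measurableSet_Ioc] with u hu
    have hu0 : 0 < u := hu.1
    obtain ⟨h0, h1⟩ := hexp u hu0.le
    rw [norm_of_nonneg (by positivity)]
    calc (1 - rexp (-(u * t))) * u ^ (-1 - β) ≤ (u * t) * u ^ (-1 - β) :=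
          mul_le_mul_of_nonneg_right (h1.trans (min_le_left _ _)) (by positivity)
      _ = t * u ^ (-β) := by
          rw [show -β = 1 + (-1 - β) by ring, rpow_add hu0, rpow_one]; ring
  · have hdom : IntegrableOn (fun u : ℝ => u ^ (-1 - β)) (Ioi 1) :=
      integrableOn_Ioi_rpow_of_lt (by linarith) one_pos
    refine hdom.mono' ((hcont.mono (Ioi_subset_Ioi zero_le_one)).aestronglyMeasurable
      measurableSet_Ioi) ?_
    filter_upwards [ae_restrict_mem measurableSet_Ioi] with u (hu : 1 < u)
    obtain ⟨h0, h1⟩ := hexp u (by linarith)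
    rw [norm_of_nonneg (by positivity)]
    exact mul_le_of_le_one_left (by positivity) (h1.trans (min_le_right _ _))

theorem integral_one_sub_exp_mul_rpow {β t : ℝ} (hβ0 : 0 < β) (ht : 0 ≤ t) :
    ∫ u in Ioi (0 : ℝ), (1 - rexp (-(u * t))) * u ^ (-1 - β) = t ^ β * rpowIntegralConst β := by
  rcases ht.eq_or_lt with rfl | ht
  · simp [zero_rpow hβ0.ne']
  have hscale : EqOn (fun u => (1 - rexp (-(u * t))) * u ^ (-1 - β))
      (fun u => t ^ (1 + β) * ((1 - rexp (-(t * u))) * (t * u) ^ (-1 - β))) (Ioi 0) := by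
    intro u hu
    have hcancel : t ^ (1 + β) * t ^ (-1 - β) = 1 := by rw [← rpow_add ht]; norm_num
    simp only [mul_rpow ht.le (le_of_lt hu), mul_comm u t]
    linear_combination -((1 - rexp (-(t * u))) * u ^ (-1 - β)) * hcancel
  rw [setIntegral_congr_fun measurableSet_Ioi hscale, integral_const_mul,
    integral_comp_mul_left_Ioi (fun u => (1 - rexp (-u)) * u ^ (-1 - β)) 0 ht, mul_zero,
    smul_eq_mul, rpowIntegralConst, ← mul_assoc, ← rpow_neg_one, ← rpow_add ht]
  norm_num

theorem rpowIntegralConst_pos {β : ℝ} (hβ0 : 0 < β) (hβ1 : β < 1) : 0 < rpowIntegralConst β := by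
  have hint := integrableOn_one_sub_exp_mul_rpow hβ0 hβ1 zero_le_one
  simp only [mul_one] at hint
  rw [rpowIntegralConst, setIntegral_pos_iff_support_of_nonneg_ae _ hint]
  · refine (by simp : 0 < volume (Ioi (0 : ℝ))).trans_le (measure_mono fun u (hu : 0 < u) => ⟨?_, hu⟩)
    exact (mul_pos (by simpa using hu) (rpow_pos_of_pos hu _)).ne'
  · filter_upwards [ae_restrict_mem measurableSet_Ioi] with u (hu : 0 < u)
    exact mul_nonneg (by simpa using hu.le) (rpow_nonneg hu.le _)

theorem setIntegral_Ioi_pos {g : ℝ → ℝ} {a u₀ : ℝ} (hcont : ContinuousOn g (Ioi a))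
    (hint : IntegrableOn g (Ioi a)) (hnn : ∀ u ∈ Ioi a, 0 ≤ g u) (hu₀ : a < u₀)
    (hpos : 0 < g u₀) : 0 < ∫ u in Ioi a, g u := by
  have hmid : a < (a + u₀) / 2 := by linarith
  calc 0 < ∫ u in (a + u₀) / 2..u₀, g u :=
        intervalIntegral.integral_pos (by linarith)
          (hcont.mono fun u hu => hmid.trans_le hu.1) (fun u hu => hnn u (hmid.trans hu.1))
          ⟨u₀, right_mem_Icc.mpr (by linarith), hpos⟩
    _ = ∫ u in Ioc ((a + u₀) / 2) u₀, g u := intervalIntegral.integral_of_le (by linarith)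
    _ ≤ ∫ u in Ioi a, g u :=
        setIntegral_mono_set hint ((ae_restrict_iff' measurableSet_Ioi).mpr (ae_of_all _ hnn))
          (Ioc_subset_Ioi_self.trans (Ioi_subset_Ioi hmid.le)).eventuallyLE

theorem sum_sum_mul_one_sub_mul {ι : Type*} [Fintype ι] {y : ι → ℝ} (hy : ∑ i, y i = 0)
    (A : ι → ι → ℝ) : ∑ i, ∑ j, y i * (1 - A i j) * y j = -∑ i, ∑ j, y i * A i j * y j := by
  simp only [mul_sub, sub_mul, mul_one, Finset.sum_sub_distrib, ← Finset.mul_sum, hy, mul_zero,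
    zero_sub, Finset.sum_neg_distrib]

section rpow

variable {n : ℕ} {E : Matrix (Fin n) (Fin n) ℝ} {β : ℝ}

theorem quadForm_map_rpow_mul_rpowIntegralConst (hnn : ∀ i j, 0 ≤ E i j) (hβ0 : 0 < β)
    (hβ1 : β < 1) {y : Fin n → ℝ} (hy : ∑ i, y i = 0) :
    IntegrableOn (fun u => (∑ i, ∑ j, y i * rexp (-(u * E i j)) * y j) * u ^ (-1 - β)) (Ioi 0) ∧
      (∑ i, ∑ j, y i * E i j ^ β * y j) * rpowIntegralConst β =
        -∫ u in Ioi 0, (∑ i, ∑ j, y i * rexp (-(u * E i j)) * y j) * u ^ (-1 - β) := by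
  set f : Fin n → Fin n → ℝ → ℝ := fun i j u => (1 - rexp (-(u * E i j))) * u ^ (-1 - β)
  have hf : ∀ i j, IntegrableOn (fun u => y i * f i j u * y j) (Ioi 0) := fun i j =>
    ((integrableOn_one_sub_exp_mul_rpow hβ0 hβ1 (hnn i j)).const_mul (y i)).mul_const (y j)
  have hsum : ∀ u, ∑ i, ∑ j, y i * f i j u * y j =
      -((∑ i, ∑ j, y i * rexp (-(u * E i j)) * y j) * u ^ (-1 - β)) := by
    intro u
    rw [← neg_mul, ← sum_sum_mul_one_sub_mul hy, Finset.sum_mul]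
    exact Finset.sum_congr rfl fun i _ => by
      rw [Finset.sum_mul]; exact Finset.sum_congr rfl fun j _ => by ring
  have hint : IntegrableOn (fun u => ∑ i, ∑ j, y i * f i j u * y j) (Ioi 0) :=
    integrable_finsetSum _ fun i _ => integrable_finsetSum _ fun j _ => hf i j
  refine ⟨by simpa only [hsum, Pi.neg_def, neg_neg] using hint.neg, ?_⟩
  rw [← integral_neg, ← setIntegral_congr_fun measurableSet_Ioi fun u _ => hsum u,
    integral_finsetSum _ fun i _ => integrable_finsetSum _ fun j _ => hf i j, Finset.sum_mul]
  refine Finset.sum_congr rfl fun i _ => ?_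
  rw [integral_finsetSum _ fun j _ => hf i j, Finset.sum_mul]
  refine Finset.sum_congr rfl fun j _ => ?_
  rw [integral_mul_const, integral_const_mul, integral_one_sub_exp_mul_rpow hβ0 (hnn i j)]
  ring

theorem tendsto_quadForm_exp_neg_mul (hdiag : ∀ i, E i i = 0)
    (hoff : ∀ i j, i ≠ j → 0 < E i j) (y : Fin n → ℝ) :
    Tendsto (fun u => ∑ i, ∑ j, y i * rexp (-(u * E i j)) * y j) atTop (𝓝 (∑ i, y i * y i)) := by
  refine tendsto_finsetSum _ fun i _ => ?_
  have hdiagonal : y i * y i = ∑ j, if i = j then y i * y j else 0 := by simp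
  rw [hdiagonal]
  refine tendsto_finsetSum _ fun j _ => ?_
  rcases eq_or_ne i j with rfl | hij
  · simp [hdiag]
  · simp only [hij, if_false]
    have hexp : Tendsto (fun u => rexp (-(u * E i j))) atTop (𝓝 0) :=
      tendsto_exp_atBot.comp (tendsto_neg_atTop_atBot.comp
        (tendsto_id.atTop_mul_const (hoff i j hij)))
    simpa using (hexp.const_mul (y i)).mul_const (y j)

theorem IsAND.map_rpow (hE : IsAND E) (hdiag : ∀ i, E i i = 0) (hnn : ∀ i j, 0 ≤ E i j)
    (hβ0 : 0 < β) (hβ1 : β < 1) : IsAND (E.map (· ^ β)) := by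
  refine ⟨hE.1.map _, fun y hy => ?_⟩
  obtain ⟨-, hrepr⟩ := quadForm_map_rpow_mul_rpowIntegralConst hnn hβ0 hβ1 hy
  refine nonpos_of_mul_nonpos_left (hrepr.trans_le (neg_nonpos.mpr ?_))
    (rpowIntegralConst_pos hβ0 hβ1)
  refine setIntegral_nonneg measurableSet_Ioi fun u (hu : 0 < u) => mul_nonneg ?_ (by positivity)
  simpa [dotProduct_mulVec_eq_sum] using
    (hE.posSemidef_map_exp_neg_mul hdiag hu.le).dotProduct_mulVec_nonneg y

theorem IsAND.isStrictAND_map_rpow (hE : IsAND E) (hdiag : ∀ i, E i i = 0)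
    (hoff : ∀ i j, i ≠ j → 0 < E i j) (hβ0 : 0 < β) (hβ1 : β < 1) :
    IsStrictAND (E.map (· ^ β)) := by
  have hnn : ∀ i j, 0 ≤ E i j := fun i j => by
    rcases eq_or_ne i j with rfl | hij
    exacts [(hdiag i).ge, (hoff i j hij).le]
  refine ⟨hE.1.map _, fun y hy hy0 => ?_⟩
  obtain ⟨hint, hrepr⟩ := quadForm_map_rpow_mul_rpowIntegralConst hnn hβ0 hβ1 hy
  refine (neg_iff_pos_of_mul_neg (hrepr.trans_lt (neg_neg_iff_pos.mpr ?_))).mpr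
    (rpowIntegralConst_pos hβ0 hβ1)
  set L := fun u => ∑ i, ∑ j, y i * rexp (-(u * E i j)) * y j
  have hL : ∀ u, 0 ≤ u → 0 ≤ L u := fun u hu => by
    simpa [dotProduct_mulVec_eq_sum] using
      (hE.posSemidef_map_exp_neg_mul hdiag hu).dotProduct_mulVec_nonneg y
  have hlim : 0 < ∑ i, y i * y i := by
    obtain ⟨i, hi⟩ := Function.ne_iff.mp hy0
    exact Finset.sum_pos' (fun j _ => mul_self_nonneg _) ⟨i, Finset.mem_univ _, mul_self_pos.mpr hi⟩
  obtain ⟨u₀, hLu₀, hu₀⟩ := ((tendsto_quadForm_exp_neg_mul hdiag hoff y).eventually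
    (lt_mem_nhds hlim)).and (eventually_gt_atTop 0) |>.exists
  refine setIntegral_Ioi_pos ?_ hint (fun u (hu : 0 < u) => mul_nonneg (hL u hu.le) (by positivity))
    hu₀ (mul_pos hLu₀ (rpow_pos_of_pos hu₀ _))
  exact ContinuousOn.mul (by fun_prop) fun u hu =>
    (continuousAt_rpow_const u _ (.inl (ne_of_gt hu))).continuousWithinAt

end rpow

theorem neg_one_pow_mul_prod_pos {n : ℕ} {f : Fin n → ℝ} {i₀ : Fin n} (h₀ : 0 < f i₀)
    (hneg : ∀ j, j ≠ i₀ → f j < 0) : 0 < (-1) ^ (n - 1) * ∏ i, f i := by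
  have hcard : (Finset.univ.erase i₀).card = n - 1 := by simp
  rw [← Finset.mul_prod_erase _ _ (Finset.mem_univ i₀), ← hcard, ← Finset.prod_const,
    mul_left_comm, ← Finset.prod_mul_distrib]
  exact mul_pos h₀ (Finset.prod_pos fun j hj => by
    linarith [hneg j (Finset.ne_of_mem_erase hj)])

section det

variable {n : ℕ} {B : Matrix (Fin n) (Fin n) ℝ}

theorem IsStrictAND.eigenvalues_neg_of_nonneg (hB : IsStrictAND B) (hH : B.IsHermitian)
    {i j : Fin n} (hij : i ≠ j) (hi : 0 ≤ hH.eigenvalues i) : hH.eigenvalues j < 0 := by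
  by_contra! hj
  set U : Matrix (Fin n) (Fin n) ℝ := (hH.eigenvectorUnitary : Matrix (Fin n) (Fin n) ℝ)
  set L : Fin n → ℝ := fun k => ∑ r, U r k
  obtain ⟨a, b, hab, hL⟩ : ∃ a b : ℝ, (a ≠ 0 ∨ b ≠ 0) ∧ a * L i + b * L j = 0 := by
    by_cases hLi : L i = 0
    · exact ⟨1, 0, .inl one_ne_zero, by simp [hLi]⟩
    · exact ⟨L j, -L i, .inr (neg_ne_zero.mpr hLi), by ring⟩
  set w : Fin n → ℝ := Pi.single i a + Pi.single j b
  have hw : w ≠ 0 := by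
    intro h
    rcases hab with ha | hb
    · exact ha (by simpa [w, hij.symm] using congr_fun h i)
    · exact hb (by simpa [w, hij] using congr_fun h j)
  have hUw : U *ᵥ w ≠ 0 := fun h => hw <| by
    rw [← one_mulVec w, ← Unitary.star_mul_self_of_mem hH.eigenvectorUnitary.2, ← mulVec_mulVec,
      h, mulVec_zero]
  have hsum : ∑ r, (U *ᵥ w) r = 0 := by
    simp only [w, mulVec_add, Pi.add_apply, Finset.sum_add_distrib]
    simp only [mulVec, dotProduct, Pi.single_apply, mul_ite, mul_zero, Finset.sum_ite_eq',
      Finset.mem_univ, if_true, ← Finset.sum_mul]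
    linear_combination hL
  have hform := hB.2 _ hsum hUw
  rw [← dotProduct_mulVec_eq_sum, hH.dotProduct_mulVec_eigenvectorUnitary_mulVec] at hform
  refine hform.not_ge (Finset.sum_nonneg fun k _ => ?_)
  by_cases hki : k = i
  · exact hki ▸ mul_nonneg hi (sq_nonneg _)
  by_cases hkj : k = j
  · exact hkj ▸ mul_nonneg hj (sq_nonneg _)
  simp [w, hki, hkj]

theorem IsStrictAND.neg_one_pow_mul_det_pos (hB : IsStrictAND B) (hsum : 0 < ∑ i, ∑ j, B i j) :
    0 < (-1) ^ (n - 1) * B.det := by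
  have hH : B.IsHermitian := isHermitian_iff_isSymm.mpr hB.1
  obtain ⟨i₀, hi₀⟩ := hH.exists_eigenvalues_pos hsum
  rw [hH.det_eq_prod_eigenvalues]
  exact neg_one_pow_mul_prod_pos hi₀ fun j hj => hB.eigenvalues_neg_of_nonneg hH hj.symm hi₀.le

end det

section distance

variable {n : ℕ}

theorem IsAND.add {A B : Matrix (Fin n) (Fin n) ℝ} (hA : IsAND A) (hB : IsAND B) :
    IsAND (A + B) := by
  refine ⟨hA.1.add hB.1, fun y hy => ?_⟩
  simp only [Matrix.add_apply, mul_add, add_mul, Finset.sum_add_distrib]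
  exact add_nonpos (hA.2 y hy) (hB.2 y hy)

theorem isAND_zero : IsAND (0 : Matrix (Fin n) (Fin n) ℝ) :=
  ⟨isSymm_zero, fun y _ => by simp⟩

theorem isAND_sq_sub (s : Fin n → ℝ) : IsAND (of fun i j => (s i - s j) ^ 2) := by
  refine ⟨IsSymm.ext fun i j => by simp only [of_apply]; ring, fun y hy => ?_⟩
  have hexpand : ∑ i, ∑ j, y i * of (fun i j => (s i - s j) ^ 2) i j * y j =
      -2 * ((∑ i, y i * s i) * (∑ j, y j * s j)) := by
    have hterm : ∀ i j, y i * of (fun i j => (s i - s j) ^ 2) i j * y j =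
        s i ^ 2 * y i * y j + y i * (s j ^ 2 * y j) - 2 * (y i * s i * (y j * s j)) := by
      intro i j; simp only [of_apply]; ring
    rw [Finset.sum_mul_sum]
    simp only [hterm, Finset.sum_add_distrib, Finset.sum_sub_distrib, ← Finset.mul_sum,
      ← Finset.sum_mul, hy]
    ring
  rw [hexpand]
  exact mul_nonpos_of_nonpos_of_nonneg (by norm_num) (mul_self_nonneg _)

variable {d : ℕ}

noncomputable def powDistMatrix (p : ℝ) (x : Fin n → Fin d → ℝ) : Matrix (Fin n) (Fin n) ℝ :=
  of fun i j => ∑ k, |x i k - x j k| ^ p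

theorem powDistMatrix_apply_self {p : ℝ} (hp : p ≠ 0) (x : Fin n → Fin d → ℝ) (i : Fin n) :
    powDistMatrix p x i i = 0 := by
  simp [powDistMatrix, zero_rpow hp]

theorem powDistMatrix_nonneg (p : ℝ) (x : Fin n → Fin d → ℝ) (i j : Fin n) :
    0 ≤ powDistMatrix p x i j :=
  Finset.sum_nonneg (s := Finset.univ) fun k _ => rpow_nonneg (abs_nonneg (x i k - x j k)) p

theorem powDistMatrix_pos (p : ℝ) {x : Fin n → Fin d → ℝ} {i j : Fin n} (hx : x i ≠ x j) :
    0 < powDistMatrix p x i j := by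
  obtain ⟨k, hk⟩ := Function.ne_iff.mp hx
  exact Finset.sum_pos' (fun l _ => rpow_nonneg (abs_nonneg (x i l - x j l)) p)
    ⟨k, Finset.mem_univ k, rpow_pos_of_pos (abs_pos.mpr (sub_ne_zero.mpr hk)) p⟩

theorem abs_rpow_eq_sq_rpow (t p : ℝ) : |t| ^ p = (t ^ 2) ^ (p / 2) := by
  rw [← sq_abs, ← rpow_natCast, ← rpow_mul (abs_nonneg t)]
  ring_nf

theorem isAND_powDistMatrix {p : ℝ} (hp0 : 0 < p) (hp2 : p < 2) (x : Fin n → Fin d → ℝ) :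
    IsAND (powDistMatrix p x) := by
  have hsum : powDistMatrix p x = ∑ k, (of fun i j => (x i k - x j k) ^ 2).map (· ^ (p / 2)) := by
    ext i j
    simp [powDistMatrix, Matrix.sum_apply, abs_rpow_eq_sq_rpow _ p]
  rw [hsum]
  refine Finset.sum_induction _ IsAND (fun _ _ => IsAND.add) isAND_zero fun k _ => ?_
  exact (isAND_sq_sub _).map_rpow (by simp) (fun _ _ => sq_nonneg _) (by linarith) (by linarith)

theorem of_pNorm_sub_eq_map_rpow (p : ℝ) (x : Fin n → Fin d → ℝ) :
    (of fun i j => pNorm p (x i - x j)) = (powDistMatrix p x).map (· ^ (1 / p)) :=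
  rfl

theorem sum_sum_pos_of_nonneg {ι : Type*} [Fintype ι] {A : Matrix ι ι ℝ} (hA : ∀ i j, 0 ≤ A i j)
    {i j : ι} (hij : 0 < A i j) : 0 < ∑ i, ∑ j, A i j :=
  Finset.sum_pos' (fun i _ => Finset.sum_nonneg fun j _ => hA i j)
    ⟨i, Finset.mem_univ i, Finset.sum_pos' (fun j _ => hA i j) ⟨j, Finset.mem_univ j, hij⟩⟩

end distance

theorem stmt4 {d n : ℕ}
    (p : ℝ) (hp1 : 1 < p) (hp2 : p < 2)
    (x : Fin n → (Fin d → ℝ)) :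
    IsAND (Matrix.of fun i j => pNorm p (x i - x j)) ∧
      (2 ≤ n → Function.Injective x →
        IsStrictAND (Matrix.of fun i j => pNorm p (x i - x j)) ∧
          0 < (-1 : ℝ) ^ (n - 1) *
              (Matrix.of fun i j => pNorm p (x i - x j)).det) := by
  have hp0 : 0 < p := by linarith
  have hβ0 : 0 < 1 / p := by positivity
  have hβ1 : 1 / p < 1 := (div_lt_one hp0).mpr hp1
  have hD := isAND_powDistMatrix hp0 hp2 x
  have hdiag := powDistMatrix_apply_self hp0.ne' x
  have hnn := powDistMatrix_nonneg p x
  rw [of_pNorm_sub_eq_map_rpow]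
  refine ⟨hD.map_rpow hdiag hnn hβ0 hβ1, fun hn2 hx => ?_⟩
  have hpos : ∀ i j, i ≠ j → 0 < powDistMatrix p x i j := fun i j hij =>
    powDistMatrix_pos p (hx.ne hij)
  have hstrict := hD.isStrictAND_map_rpow hdiag hpos hβ0 hβ1
  obtain ⟨i, j, hij⟩ := (Fin.nontrivial_iff_two_le.mpr hn2).exists_pair_ne
  exact ⟨hstrict, hstrict.neg_one_pow_mul_det_pos <| sum_sum_pos_of_nonneg
    (fun i j => rpow_nonneg (hnn i j) _) (rpow_pos_of_pos (hpos i j hij) _)⟩
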